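/- arXiv:2210.08846 — 2 statements merged into one kernel-verified Lean document; each statement's English description precedes it below -/
import Mathlib

section
/- Let n, m, j be positive integers and σ_w > 0. On a probability space, let D be a random (n+m)×j real matrix and W a random n×j real matrix such that: (i) D Dᵀ is almost surely invertible; (ii) D and W are independent; (iii) E[vec(W) vec(W)ᵀ] = σ_w² I_{nj}; and (iv) ‖D‖_F², tr((D Dᵀ)⁻¹), and ‖W Dᵀ (D Dᵀ)⁻¹‖_F² are integrable with tr(E[D Dᵀ]) > 0. Let Θ ∈ ℝ^{n×(n+m)} be a fixed matrix and set X = Θ D + W. Then the expected mean-square estimation error of the least squares estimator satisfies E[(1/(n(n+m))) ‖Θ − X Dᵀ (D Dᵀ)⁻¹‖_F²] ≥ (m+n) σ_w² / tr(E[D Dᵀ]). -/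
open Matrix MeasureTheory ProbabilityTheory Finset

instance matrixMeasurableSpace {m n α : Type*} [MeasurableSpace α] :
    MeasurableSpace (Matrix m n α) := MeasurableSpace.pi

/-- The squared Frobenius norm of a real matrix. -/
noncomputable def frobNormSq {α β : Type*} [Fintype α] [Fintype β]
    (M : Matrix α β ℝ) : ℝ :=
  ∑ i, ∑ j, M i j ^ 2

/-- Column-stack vector of an `n × j` matrix, indexed by pairs (column, row). -/
def vecCol {n j : ℕ} (M : Matrix (Fin n) (Fin j) ℝ) : Fin j × Fin n → ℝ :=
  fun p => M p.2 p.1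

/-- Entrywise expectation of a random matrix. -/
noncomputable def matExp {Ω α β : Type*} [MeasureSpace Ω]
    (M : Ω → Matrix α β ℝ) : Matrix α β ℝ :=
  Matrix.of fun i k => ∫ ω, M ω i k

section Aux

/-- Cauchy-Schwarz on eigenvalues, conjugated form. -/
lemma trace_cs_aux {d : ℕ} (U : Matrix (Fin d) (Fin d) ℝ) (lam : Fin d → ℝ)
    (hUU : star U * U = 1) (hUU' : U * star U = 1) (hl : ∀ i, 0 < lam i) :
    (d : ℝ) ^ 2 ≤ (U * diagonal lam * star U).trace * (U * diagonal lam * star U)⁻¹.trace := by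
  have hinv : (U * diagonal lam * star U)⁻¹ = U * diagonal (fun i => (lam i)⁻¹) * star U := by
    apply Matrix.inv_eq_right_inv
    calc U * diagonal lam * star U * (U * diagonal (fun i => (lam i)⁻¹) * star U)
        = U * (diagonal lam * (star U * U) * diagonal (fun i => (lam i)⁻¹)) * star U := by
          noncomm_ring
      _ = 1 := by
          rw [hUU, Matrix.mul_one, Matrix.diagonal_mul_diagonal]
          have : (fun i => lam i * (lam i)⁻¹) = fun _ => (1:ℝ) := by
            funext i; exact mul_inv_cancel₀ (hl i).ne'
          rw [this, Matrix.diagonal_one, Matrix.mul_one, hUU']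
  have htr : (U * diagonal lam * star U).trace = ∑ i, lam i := by
    rw [Matrix.trace_mul_cycle, hUU, Matrix.one_mul, Matrix.trace_diagonal]
  have htr' : (U * diagonal lam * star U)⁻¹.trace = ∑ i, (lam i)⁻¹ := by
    rw [hinv, Matrix.trace_mul_cycle, hUU, Matrix.one_mul, Matrix.trace_diagonal]
  rw [htr, htr']
  have hcs := Finset.sum_mul_sq_le_sq_mul_sq Finset.univ
    (fun i => Real.sqrt (lam i)) (fun i => Real.sqrt ((lam i)⁻¹))
  have h1 : ∀ i, Real.sqrt (lam i) * Real.sqrt ((lam i)⁻¹) = 1 := by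
    intro i
    rw [← Real.sqrt_mul (hl i).le, mul_inv_cancel₀ (hl i).ne', Real.sqrt_one]
  have h2 : ∀ i, Real.sqrt (lam i) ^ 2 = lam i := fun i => Real.sq_sqrt (hl i).le
  have h3 : ∀ i, Real.sqrt ((lam i)⁻¹) ^ 2 = (lam i)⁻¹ := fun i =>
    Real.sq_sqrt (inv_nonneg.mpr (hl i).le)
  simp only [h1, h2, h3, Finset.sum_const, Finset.card_univ, Fintype.card_fin, nsmul_eq_mul,
    mul_one] at hcs
  simpa using hcs

/-- For a positive definite real matrix, `d² ≤ tr S · tr S⁻¹`. -/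
lemma trace_mul_trace_inv {d : ℕ} (S : Matrix (Fin d) (Fin d) ℝ) (hS : S.PosDef) :
    (d : ℝ) ^ 2 ≤ S.trace * S⁻¹.trace := by
  classical
  have hH := hS.isHermitian
  have hspec : S = (hH.eigenvectorUnitary : Matrix (Fin d) (Fin d) ℝ) * diagonal hH.eigenvalues
      * star (hH.eigenvectorUnitary : Matrix (Fin d) (Fin d) ℝ) := by
    simpa [Function.comp] using hH.spectral_theorem
  rw [hspec]
  exact trace_cs_aux _ _ (Unitary.coe_star_mul_self hH.eigenvectorUnitary)
    (Unitary.coe_mul_star_self hH.eigenvectorUnitary) hS.eigenvalues_pos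

variable {Ω' : Type*} [MeasurableSpace Ω']

lemma meas_det {d : ℕ} {M : Ω' → Matrix (Fin d) (Fin d) ℝ}
    (hM : ∀ i k, Measurable fun ω => M ω i k) : Measurable fun ω => (M ω).det := by
  simp only [Matrix.det_apply']
  exact Finset.measurable_sum _ fun σ _ =>
    (Finset.measurable_prod _ fun i _ => hM _ _).const_mul _

lemma meas_adj {d : ℕ} {M : Ω' → Matrix (Fin d) (Fin d) ℝ}
    (hM : ∀ i k, Measurable fun ω => M ω i k) (i k : Fin d) :
    Measurable fun ω => (M ω).adjugate i k := by
  simp only [Matrix.adjugate_apply]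
  refine meas_det fun r c => ?_
  rcases eq_or_ne r k with h | h <;> simp [Matrix.updateRow_apply, h]
  exact hM r c

lemma meas_inv {d : ℕ} {M : Ω' → Matrix (Fin d) (Fin d) ℝ}
    (hM : ∀ i k, Measurable fun ω => M ω i k) (i k : Fin d) :
    Measurable fun ω => (M ω)⁻¹ i k := by
  simp only [Matrix.inv_def, Matrix.smul_apply, smul_eq_mul, Ring.inverse_eq_inv]
  exact ((meas_det hM).inv).mul (meas_adj hM i k)

lemma meas_B {d j : ℕ} {M : Ω' → Matrix (Fin d) (Fin j) ℝ}
    (hM : ∀ i k, Measurable fun ω => M ω i k) (l : Fin j) (k : Fin d) :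
    Measurable fun ω => ((M ω)ᵀ * (M ω * (M ω)ᵀ)⁻¹) l k := by
  have hS : ∀ i k, Measurable fun ω => (M ω * (M ω)ᵀ) i k := by
    intro i k
    simp only [Matrix.mul_apply, Matrix.transpose_apply]
    exact Finset.measurable_sum _ fun c _ => (hM i c).mul (hM k c)
  simp only [Matrix.mul_apply, Matrix.transpose_apply]
  exact Finset.measurable_sum _ fun r _ => (hM r l).mul (meas_inv hS r k)

lemma posDef_of_isUnit_det {d j : ℕ} (Dm : Matrix (Fin d) (Fin j) ℝ)
    (h : IsUnit (Dm * Dmᵀ).det) : (Dm * Dmᵀ).PosDef := by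
  have hPSD : (Dm * Dmᵀ).PosSemidef := by
    have := Matrix.posSemidef_self_mul_conjTranspose Dm
    rwa [Matrix.conjTranspose_eq_transpose_of_trivial] at this
  refine ⟨hPSD.1, fun x hx => lt_of_le_of_ne (hPSD.2 x) fun heq => hx ?_⟩
  have h1 : star x ⬝ᵥ ((Dm * Dmᵀ) *ᵥ x) = (Dmᵀ *ᵥ x) ⬝ᵥ (Dmᵀ *ᵥ x) := by
    rw [← Matrix.mulVec_mulVec, Matrix.dotProduct_mulVec, star_trivial,
      ← Matrix.mulVec_transpose]
  have h0 : (Dmᵀ *ᵥ x) ⬝ᵥ (Dmᵀ *ᵥ x) = 0 := by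
    rw [← h1, heq]
    simp [dotProduct, mulVec, Finsupp.sum_fintype, Finset.mul_sum, mul_assoc]
  have hy : Dmᵀ *ᵥ x = 0 := dotProduct_self_eq_zero.mp h0
  have hx0 : (Dm * Dmᵀ) *ᵥ x = 0 := by
    rw [← Matrix.mulVec_mulVec, hy, Matrix.mulVec_zero]
  have := congrArg (fun v => (Dm * Dmᵀ)⁻¹ *ᵥ v) hx0
  simpa [Matrix.mulVec_mulVec, Matrix.nonsing_inv_mul _ h] using this

lemma frob_eq_trace {d j : ℕ} (B : Matrix (Fin j) (Fin d) ℝ) :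
    frobNormSq B = (Bᵀ * B).trace := by
  rw [Matrix.trace]
  simp only [Matrix.diag, Matrix.mul_apply, Matrix.transpose_apply, frobNormSq, pow_two]
  exact Finset.sum_comm

lemma BtB_eq_inv {d j : ℕ} (Dm : Matrix (Fin d) (Fin j) ℝ)
    (h : IsUnit (Dm * Dmᵀ).det) :
    (Dmᵀ * (Dm * Dmᵀ)⁻¹)ᵀ * (Dmᵀ * (Dm * Dmᵀ)⁻¹) = (Dm * Dmᵀ)⁻¹ := by
  have hSym : (Dm * Dmᵀ)ᵀ = Dm * Dmᵀ := by
    rw [Matrix.transpose_mul, Matrix.transpose_transpose]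
  have hinvT : ((Dm * Dmᵀ)⁻¹)ᵀ = (Dm * Dmᵀ)⁻¹ := by
    rw [Matrix.transpose_nonsing_inv, hSym]
  calc (Dmᵀ * (Dm * Dmᵀ)⁻¹)ᵀ * (Dmᵀ * (Dm * Dmᵀ)⁻¹)
      = ((Dm * Dmᵀ)⁻¹)ᵀ * (Dm * Dmᵀ * (Dm * Dmᵀ)⁻¹) := by
        rw [Matrix.transpose_mul, Matrix.transpose_transpose]; simp only [Matrix.mul_assoc]
    _ = (Dm * Dmᵀ)⁻¹ := by
        rw [Matrix.mul_nonsing_inv _ h, Matrix.mul_one, hinvT]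

lemma sq_entry_le_frob {α β : Type*} [Fintype α] [Fintype β] (M : Matrix α β ℝ)
    (a : α) (b : β) : M a b ^ 2 ≤ frobNormSq M := by
  calc M a b ^ 2 ≤ ∑ c, M a c ^ 2 :=
        Finset.single_le_sum (f := fun c => M a c ^ 2) (fun c _ => sq_nonneg _)
          (Finset.mem_univ b)
    _ ≤ ∑ i, ∑ c, M i c ^ 2 :=
        Finset.single_le_sum (f := fun i => ∑ c, M i c ^ 2)
          (fun i _ => Finset.sum_nonneg fun c _ => sq_nonneg _) (Finset.mem_univ a)

lemma abs_entry_mul_le {α β : Type*} [Fintype α] [Fintype β] (M : Matrix α β ℝ)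
    (l l' : α) (k k' : β) : |M l k * M l' k'| ≤ frobNormSq M := by
  have h1 := sq_entry_le_frob M l k
  have h2 := sq_entry_le_frob M l' k'
  rw [abs_mul]
  nlinarith [sq_nonneg (|M l k| - |M l' k'|), sq_abs (M l k), sq_abs (M l' k'),
    abs_nonneg (M l k), abs_nonneg (M l' k')]

lemma frobNormSq_nonneg {α β : Type*} [Fintype α] [Fintype β] (M : Matrix α β ℝ) :
    0 ≤ frobNormSq M :=
  Finset.sum_nonneg fun _ _ => Finset.sum_nonneg fun _ _ => sq_nonneg _

lemma frobNormSq_neg {α β : Type*} [Fintype α] [Fintype β] (M : Matrix α β ℝ) :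
    frobNormSq (-M) = frobNormSq M := by
  simp [frobNormSq]

lemma tangent_ineq (c1 t x y : ℝ) (hc : 0 < c1) (ht : 0 < t) (hx : 0 ≤ x)
    (hxy : c1 ≤ x * y) : c1 * 2 / t - c1 / t ^ 2 * x ≤ y := by
  have hx' : 0 < x := by
    rcases hx.lt_or_eq with h | h
    · exact h
    · exfalso; rw [← h, zero_mul] at hxy; linarith
  have h1 : c1 * (2 * t) - c1 * x ≤ y * t ^ 2 := by
    nlinarith [sq_nonneg (t - x), mul_pos hx' ht, sq_nonneg t]
  have h2 : c1 * 2 / t - c1 / t ^ 2 * x = (c1 * (2 * t) - c1 * x) / t ^ 2 := by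
    field_simp
  rw [h2]
  exact (div_le_iff₀ (by positivity)).mpr h1

end Aux

/-- core inequality of Theorem 1. Under the stated assumptions on the
random data matrix `D` and noise matrix `W`, with `X = Θ D + W`, the expected
mean-square error of the least squares estimator `X Dᵀ (D Dᵀ)⁻¹` of `Θ` satisfies
`E[(1/(n(n+m))) ‖Θ − X Dᵀ (D Dᵀ)⁻¹‖_F²] ≥ (m+n) σ_w² / tr(E[D Dᵀ])`. -/
theorem sample_identifying_complexity_lower_bound
    (n m j : ℕ) (hn : 0 < n) (hm : 0 < m) (hj : 0 < j)
    (σw : ℝ) (hσw : 0 < σw)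
    {Ω : Type*} [MeasureSpace Ω] [IsProbabilityMeasure (ℙ : Measure Ω)]
    (D : Ω → Matrix (Fin (n + m)) (Fin j) ℝ)
    (W : Ω → Matrix (Fin n) (Fin j) ℝ)
    (hDmeas : Measurable D) (hWmeas : Measurable W)
    -- (i) `D Dᵀ` is almost surely invertible
    (hDinv : ∀ᵐ ω ∂ℙ, IsUnit (D ω * (D ω)ᵀ).det)
    -- (ii) `D` and `W` are independent
    (hindep : IndepFun D W ℙ)
    -- (iii) `E[vec(W) vec(W)ᵀ] = σ_w² I`
    (hWcov : (Matrix.of fun p q : Fin j × Fin n =>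
        ∫ ω, vecCol (W ω) p * vecCol (W ω) q) =
      σw ^ 2 • (1 : Matrix (Fin j × Fin n) (Fin j × Fin n) ℝ))
    -- (iv) integrability assumptions and nondegeneracy of `tr(E[D Dᵀ])`
    (hDint : Integrable (fun ω => frobNormSq (D ω)) ℙ)
    (hinvint : Integrable (fun ω => ((D ω * (D ω)ᵀ)⁻¹).trace) ℙ)
    (herrint : Integrable
      (fun ω => frobNormSq (W ω * (D ω)ᵀ * (D ω * (D ω)ᵀ)⁻¹)) ℙ)
    (htr : 0 < (matExp fun ω => D ω * (D ω)ᵀ).trace)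
    (Θ : Matrix (Fin n) (Fin (n + m)) ℝ)
    (X : Ω → Matrix (Fin n) (Fin j) ℝ) (hX : ∀ ω, X ω = Θ * D ω + W ω) :
    (∫ ω, (1 / ((n : ℝ) * ((n : ℝ) + m))) *
        frobNormSq (Θ - X ω * (D ω)ᵀ * (D ω * (D ω)ᵀ)⁻¹)) ≥
      ((m : ℝ) + n) * σw ^ 2 / (matExp fun ω => D ω * (D ω)ᵀ).trace := by
  classical
  -- entry measurability
  have hDe : ∀ i k, Measurable fun ω => D ω i k := fun i k =>
    (measurable_pi_apply k).comp ((measurable_pi_apply i).comp hDmeas)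
  have hWe : ∀ i k, Measurable fun ω => W ω i k := fun i k =>
    (measurable_pi_apply k).comp ((measurable_pi_apply i).comp hWmeas)
  have hBe : ∀ l k, Measurable fun ω => ((D ω)ᵀ * (D ω * (D ω)ᵀ)⁻¹) l k :=
    fun l k => meas_B hDe l k
  -- a.e. facts
  have hBfrob : ∀ᵐ ω ∂ℙ, frobNormSq ((D ω)ᵀ * (D ω * (D ω)ᵀ)⁻¹)
      = ((D ω * (D ω)ᵀ)⁻¹).trace := by
    filter_upwards [hDinv] with ω h
    rw [frob_eq_trace, BtB_eq_inv _ h]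
  have hBfrobInt : Integrable (fun ω => frobNormSq ((D ω)ᵀ * (D ω * (D ω)ᵀ)⁻¹)) ℙ :=
    hinvint.congr (hBfrob.mono fun ω h => h.symm)
  -- integrability of B-products
  have hBint : ∀ l l' k, Integrable (fun ω =>
      ((D ω)ᵀ * (D ω * (D ω)ᵀ)⁻¹) l k * ((D ω)ᵀ * (D ω * (D ω)ᵀ)⁻¹) l' k) ℙ := by
    intro l l' k
    refine hBfrobInt.mono' ((hBe l k).mul (hBe l' k)).aestronglyMeasurable ?_
    filter_upwards with ω
    rw [Real.norm_eq_abs]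
    exact abs_entry_mul_le _ l l' k k
  -- integrability of W-products
  have hWsqInt : ∀ i l, Integrable (fun ω => W ω i l * W ω i l) ℙ := by
    intro i l
    by_contra hni
    have h0 : ∫ ω, W ω i l * W ω i l = 0 := integral_undef hni
    have h := congrFun (congrFun hWcov (l, i)) (l, i)
    simp only [Matrix.of_apply, vecCol, Matrix.smul_apply, Matrix.one_apply_eq,
      smul_eq_mul, mul_one] at h
    rw [h0] at h
    nlinarith
  have hWint : ∀ i l l', Integrable (fun ω => W ω i l * W ω i l') ℙ := by
    intro i l l'
    refine ((hWsqInt i l).add (hWsqInt i l')).mono'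
      ((hWe i l).mul (hWe i l')).aestronglyMeasurable ?_
    filter_upwards with ω
    simp only [Pi.add_apply]
    rw [Real.norm_eq_abs, abs_mul]
    nlinarith [sq_nonneg (|W ω i l| - |W ω i l'|), sq_abs (W ω i l), sq_abs (W ω i l'),
      abs_nonneg (W ω i l), abs_nonneg (W ω i l')]
  -- covariance entries
  have hWcov' : ∀ (i : Fin n) (l l' : Fin j),
      (∫ ω, W ω i l * W ω i l') = if l = l' then σw ^ 2 else 0 := by
    intro i l l'
    have h := congrFun (congrFun hWcov (l, i)) (l', i)
    simp only [Matrix.of_apply, vecCol, Matrix.smul_apply, Matrix.one_apply,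
      smul_eq_mul, Prod.mk.injEq, and_true, mul_ite, mul_one, mul_zero] at h
    exact h
  -- independence of products
  have hIF : ∀ (i : Fin n) (l l' : Fin j) (k : Fin (n + m)),
      IndepFun (fun ω => W ω i l * W ω i l')
        (fun ω => ((D ω)ᵀ * (D ω * (D ω)ᵀ)⁻¹) l k * ((D ω)ᵀ * (D ω * (D ω)ᵀ)⁻¹) l' k) ℙ := by
    intro i l l' k
    have hMe : ∀ (a : Fin n) (b : Fin j),
        Measurable fun Mw : Matrix (Fin n) (Fin j) ℝ => Mw a b := fun a b =>
      (measurable_pi_apply b).comp (measurable_pi_apply a)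
    have hNe : ∀ (a : Fin (n + m)) (b : Fin j),
        Measurable fun Md : Matrix (Fin (n + m)) (Fin j) ℝ => Md a b := fun a b =>
      (measurable_pi_apply b).comp (measurable_pi_apply a)
    exact hindep.symm.comp ((hMe i l).mul (hMe i l'))
      ((meas_B hNe l k).mul (meas_B hNe l' k))
  -- per-term integrability of the full product
  have hPint : ∀ (i : Fin n) (l l' : Fin j) (k : Fin (n + m)),
      Integrable (fun ω => (W ω i l * W ω i l') *
        (((D ω)ᵀ * (D ω * (D ω)ᵀ)⁻¹) l k * ((D ω)ᵀ * (D ω * (D ω)ᵀ)⁻¹) l' k)) ℙ :=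
    fun i l l' k => (hIF i l l' k).integrable_mul (hWint i l l') (hBint l l' k)
  -- integrability of frobNormSq (W * B) and its entries
  have herr' : Integrable (fun ω =>
      frobNormSq (W ω * ((D ω)ᵀ * (D ω * (D ω)ᵀ)⁻¹))) ℙ := by
    simpa only [Matrix.mul_assoc] using herrint
  have hWBe : ∀ i k, Measurable fun ω =>
      (W ω * ((D ω)ᵀ * (D ω * (D ω)ᵀ)⁻¹)) i k := by
    intro i k
    simp only [Matrix.mul_apply]
    exact Finset.measurable_sum _ fun l _ => (hWe i l).mul (hBe l k)
  have hWBsqInt : ∀ i k, Integrable (fun ω =>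
      (W ω * ((D ω)ᵀ * (D ω * (D ω)ᵀ)⁻¹)) i k ^ 2) ℙ := by
    intro i k
    refine herr'.mono' (((hWBe i k).pow measurable_const)).aestronglyMeasurable ?_
    filter_upwards with ω
    rw [Real.norm_eq_abs, abs_of_nonneg (sq_nonneg _)]
    exact sq_entry_le_frob _ i k
  -- THE KEY COMPUTATION
  have key : ∫ ω, frobNormSq (W ω * ((D ω)ᵀ * (D ω * (D ω)ᵀ)⁻¹))
      = (n : ℝ) * σw ^ 2 * ∫ ω, ((D ω * (D ω)ᵀ)⁻¹).trace := by
    have step1 : ∫ ω, frobNormSq (W ω * ((D ω)ᵀ * (D ω * (D ω)ᵀ)⁻¹))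
        = ∑ i : Fin n, ∑ k : Fin (n + m),
            ∫ ω, (W ω * ((D ω)ᵀ * (D ω * (D ω)ᵀ)⁻¹)) i k ^ 2 := by
      rw [show (fun ω => frobNormSq (W ω * ((D ω)ᵀ * (D ω * (D ω)ᵀ)⁻¹)))
          = fun ω => ∑ i : Fin n, ∑ k : Fin (n + m),
              (W ω * ((D ω)ᵀ * (D ω * (D ω)ᵀ)⁻¹)) i k ^ 2 from rfl]
      rw [integral_finset_sum _ fun i _ =>
        integrable_finset_sum _ fun k _ => hWBsqInt i k]
      exact Finset.sum_congr rfl fun i _ =>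
        integral_finset_sum _ fun k _ => hWBsqInt i k
    have step2 : ∀ (i : Fin n) (k : Fin (n + m)),
        ∫ ω, (W ω * ((D ω)ᵀ * (D ω * (D ω)ᵀ)⁻¹)) i k ^ 2
          = σw ^ 2 * ∑ l : Fin j, ∫ ω,
              ((D ω)ᵀ * (D ω * (D ω)ᵀ)⁻¹) l k * ((D ω)ᵀ * (D ω * (D ω)ᵀ)⁻¹) l k := by
      intro i k
      have hexp : ∀ ω, (W ω * ((D ω)ᵀ * (D ω * (D ω)ᵀ)⁻¹)) i k ^ 2
          = ∑ l : Fin j, ∑ l' : Fin j, (W ω i l * W ω i l') *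
              (((D ω)ᵀ * (D ω * (D ω)ᵀ)⁻¹) l k * ((D ω)ᵀ * (D ω * (D ω)ᵀ)⁻¹) l' k) := by
        intro ω
        rw [Matrix.mul_apply, sq, Finset.sum_mul_sum]
        exact Finset.sum_congr rfl fun l _ => Finset.sum_congr rfl fun l' _ => by ring
      simp only [hexp]
      rw [integral_finset_sum _ fun l _ =>
        integrable_finset_sum _ fun l' _ => hPint i l l' k]
      rw [Finset.mul_sum]
      refine Finset.sum_congr rfl fun l _ => ?_
      rw [integral_finset_sum _ fun l' _ => hPint i l l' k]
      have hrw : ∀ l' : Fin j, ∫ ω, (W ω i l * W ω i l') *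
          (((D ω)ᵀ * (D ω * (D ω)ᵀ)⁻¹) l k * ((D ω)ᵀ * (D ω * (D ω)ᵀ)⁻¹) l' k)
          = (if l = l' then σw ^ 2 else 0) *
            ∫ ω, ((D ω)ᵀ * (D ω * (D ω)ᵀ)⁻¹) l k * ((D ω)ᵀ * (D ω * (D ω)ᵀ)⁻¹) l' k := by
        intro l'
        rw [(hIF i l l' k).integral_fun_mul_eq_mul_integral
          ((hWe i l).mul (hWe i l')).aestronglyMeasurable
          ((hBe l k).mul (hBe l' k)).aestronglyMeasurable, hWcov' i l l']
      simp only [hrw, ite_mul, zero_mul]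
      rw [Finset.sum_ite_eq Finset.univ l
        (fun l' => σw ^ 2 * ∫ ω, ((D ω)ᵀ * (D ω * (D ω)ᵀ)⁻¹) l k
          * ((D ω)ᵀ * (D ω * (D ω)ᵀ)⁻¹) l' k)]
      simp
    have step3 : ∑ i : Fin n, ∑ k : Fin (n + m), (σw ^ 2 * ∑ l : Fin j, ∫ ω,
        ((D ω)ᵀ * (D ω * (D ω)ᵀ)⁻¹) l k * ((D ω)ᵀ * (D ω * (D ω)ᵀ)⁻¹) l k)
        = (n : ℝ) * σw ^ 2 * ∫ ω, ((D ω * (D ω)ᵀ)⁻¹).trace := by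
      rw [Finset.sum_const, Finset.card_univ, Fintype.card_fin, nsmul_eq_mul]
      have hswap : ∑ k : Fin (n + m), (σw ^ 2 * ∑ l : Fin j, ∫ ω,
          ((D ω)ᵀ * (D ω * (D ω)ᵀ)⁻¹) l k * ((D ω)ᵀ * (D ω * (D ω)ᵀ)⁻¹) l k)
          = σw ^ 2 * ∫ ω, frobNormSq ((D ω)ᵀ * (D ω * (D ω)ᵀ)⁻¹) := by
        rw [← Finset.mul_sum]
        congr 1
        have hfrobB : ∀ ω, frobNormSq ((D ω)ᵀ * (D ω * (D ω)ᵀ)⁻¹)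
            = ∑ k : Fin (n + m), ∑ l : Fin j,
                ((D ω)ᵀ * (D ω * (D ω)ᵀ)⁻¹) l k * ((D ω)ᵀ * (D ω * (D ω)ᵀ)⁻¹) l k := by
          intro ω
          rw [frobNormSq, Finset.sum_comm]
          exact Finset.sum_congr rfl fun k _ => Finset.sum_congr rfl fun l _ => sq _
        simp only [hfrobB]
        rw [integral_finset_sum _ fun (k : Fin (n + m)) _ =>
          integrable_finset_sum _ fun (l : Fin j) _ => hBint l l k]
        refine Finset.sum_congr rfl fun k _ => ?_
        rw [integral_finset_sum _ fun (l : Fin j) _ => hBint l l k]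
      rw [hswap, integral_congr_ae hBfrob]
      ring
    rw [step1]
    calc ∑ i : Fin n, ∑ k : Fin (n + m),
          ∫ ω, (W ω * ((D ω)ᵀ * (D ω * (D ω)ᵀ)⁻¹)) i k ^ 2
        = ∑ i : Fin n, ∑ k : Fin (n + m), (σw ^ 2 * ∑ l : Fin j, ∫ ω,
            ((D ω)ᵀ * (D ω * (D ω)ᵀ)⁻¹) l k * ((D ω)ᵀ * (D ω * (D ω)ᵀ)⁻¹) l k) := by
          exact Finset.sum_congr rfl fun i _ => Finset.sum_congr rfl fun k _ => step2 i k
      _ = (n : ℝ) * σw ^ 2 * ∫ ω, ((D ω * (D ω)ᵀ)⁻¹).trace := step3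
  -- trace of matExp equals integral of trace
  have hfr : ∀ ω, (D ω * (D ω)ᵀ).trace = frobNormSq (D ω) := by
    intro ω
    rw [Matrix.trace]
    simp [Matrix.diag, Matrix.mul_apply, frobNormSq, pow_two]
  have hStraceInt : Integrable (fun ω => (D ω * (D ω)ᵀ).trace) ℙ :=
    hDint.congr (Filter.Eventually.of_forall fun ω => (hfr ω).symm)
  have hSe : ∀ i k, Measurable fun ω => (D ω * (D ω)ᵀ) i k := by
    intro i k
    simp only [Matrix.mul_apply, Matrix.transpose_apply]
    exact Finset.measurable_sum _ fun c _ => (hDe i c).mul (hDe k c)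
  have hSiiInt : ∀ i, Integrable (fun ω => (D ω * (D ω)ᵀ) i i) ℙ := by
    intro i
    refine hStraceInt.mono' (hSe i i).aestronglyMeasurable ?_
    filter_upwards with ω
    have hnn : ∀ r, 0 ≤ (D ω * (D ω)ᵀ) r r := by
      intro r
      rw [Matrix.mul_apply]
      exact Finset.sum_nonneg fun c _ => by
        simp only [Matrix.transpose_apply]; exact mul_self_nonneg _
    rw [Real.norm_eq_abs, abs_of_nonneg (hnn i), Matrix.trace]
    exact Finset.single_le_sum (fun r _ => hnn r) (Finset.mem_univ i)
  have htExp : (matExp fun ω => D ω * (D ω)ᵀ).trace = ∫ ω, (D ω * (D ω)ᵀ).trace := by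
    have h1 : (fun ω => (D ω * (D ω)ᵀ).trace)
        = fun ω => ∑ i, (D ω * (D ω)ᵀ) i i := rfl
    rw [h1, integral_finset_sum _ fun i _ => hSiiInt i, Matrix.trace]
    rfl
  -- lower bound for ∫ tr S⁻¹
  set t : ℝ := (matExp fun ω => D ω * (D ω)ᵀ).trace with ht_def
  have hc1 : (0 : ℝ) < ((n + m : ℕ) : ℝ) ^ 2 := by positivity
  have hlow_ae : ∀ᵐ ω ∂ℙ, ((n + m : ℕ) : ℝ) ^ 2 * 2 / t
      - ((n + m : ℕ) : ℝ) ^ 2 / t ^ 2 * (D ω * (D ω)ᵀ).trace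
      ≤ ((D ω * (D ω)ᵀ)⁻¹).trace := by
    filter_upwards [hDinv] with ω h
    have hPD := posDef_of_isUnit_det (D ω) h
    have hcs := trace_mul_trace_inv _ hPD
    have hxnn : 0 ≤ (D ω * (D ω)ᵀ).trace := by
      rw [hfr ω]; exact frobNormSq_nonneg _
    exact tangent_ineq _ t _ _ hc1 htr hxnn hcs
  have hlow_int : Integrable (fun ω => ((n + m : ℕ) : ℝ) ^ 2 * 2 / t
      - ((n + m : ℕ) : ℝ) ^ 2 / t ^ 2 * (D ω * (D ω)ᵀ).trace) ℙ :=
    (integrable_const _).sub (hStraceInt.const_mul _)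
  have hinvtr_lb : ((n + m : ℕ) : ℝ) ^ 2 / t ≤ ∫ ω, ((D ω * (D ω)ᵀ)⁻¹).trace := by
    have hmono := integral_mono_ae hlow_int hinvint hlow_ae
    rw [integral_sub (integrable_const _) (hStraceInt.const_mul _)] at hmono
    rw [integral_const, integral_const_mul, ← htExp] at hmono
    have hm2 : (ℙ : Measure Ω).real (Set.univ : Set Ω) = 1 := by simp
    rw [hm2, smul_eq_mul, one_mul] at hmono
    have : ((n + m : ℕ) : ℝ) ^ 2 * 2 / t - ((n + m : ℕ) : ℝ) ^ 2 / t ^ 2 * t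
        = ((n + m : ℕ) : ℝ) ^ 2 / t := by
      field_simp
      ring
    linarith [this ▸ hmono]
  -- error identity a.e.
  have herr_ae : (fun ω => frobNormSq (Θ - X ω * (D ω)ᵀ * (D ω * (D ω)ᵀ)⁻¹))
      =ᵐ[ℙ] fun ω => frobNormSq (W ω * ((D ω)ᵀ * (D ω * (D ω)ᵀ)⁻¹)) := by
    filter_upwards [hDinv] with ω h
    have h1 : Θ * D ω * (D ω)ᵀ * (D ω * (D ω)ᵀ)⁻¹ = Θ := by
      rw [Matrix.mul_assoc Θ (D ω) (D ω)ᵀ, Matrix.mul_assoc Θ (D ω * (D ω)ᵀ) _,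
        Matrix.mul_nonsing_inv _ h, Matrix.mul_one]
    have h2 : Θ - X ω * (D ω)ᵀ * (D ω * (D ω)ᵀ)⁻¹
        = -(W ω * ((D ω)ᵀ * (D ω * (D ω)ᵀ)⁻¹)) := by
      rw [hX ω, Matrix.add_mul, Matrix.add_mul, h1, ← Matrix.mul_assoc]
      abel
    rw [h2, frobNormSq_neg]
  -- assemble
  have hLHS : ∫ ω, (1 / ((n : ℝ) * ((n : ℝ) + m))) *
      frobNormSq (Θ - X ω * (D ω)ᵀ * (D ω * (D ω)ᵀ)⁻¹)
      = (1 / ((n : ℝ) * ((n : ℝ) + m))) *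
        ((n : ℝ) * σw ^ 2 * ∫ ω, ((D ω * (D ω)ᵀ)⁻¹).trace) := by
    rw [integral_const_mul, integral_congr_ae herr_ae, key]
  rw [ge_iff_le, hLHS]
  have hpos : (0 : ℝ) < 1 / ((n : ℝ) * ((n : ℝ) + m)) * ((n : ℝ) * σw ^ 2) := by
    have hn' : (0 : ℝ) < n := by exact_mod_cast hn
    have hm' : (0 : ℝ) < m := by exact_mod_cast hm
    positivity
  have hchain : (1 / ((n : ℝ) * ((n : ℝ) + m)) * ((n : ℝ) * σw ^ 2)) *
      (((n + m : ℕ) : ℝ) ^ 2 / t) ≤ (1 / ((n : ℝ) * ((n : ℝ) + m)) * ((n : ℝ) * σw ^ 2)) *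
      ∫ ω, ((D ω * (D ω)ᵀ)⁻¹).trace :=
    mul_le_mul_of_nonneg_left hinvtr_lb hpos.le
  have hconst : (1 / ((n : ℝ) * ((n : ℝ) + m)) * ((n : ℝ) * σw ^ 2)) *
      (((n + m : ℕ) : ℝ) ^ 2 / t) = ((m : ℝ) + n) * σw ^ 2 / t := by
    have hn' : (0 : ℝ) < n := by exact_mod_cast hn
    have hm' : (0 : ℝ) < m := by exact_mod_cast hm
    have ht' : t ≠ 0 := ne_of_gt htr
    push_cast
    field_simp
    ring
  calc ((m : ℝ) + n) * σw ^ 2 / t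
      = (1 / ((n : ℝ) * ((n : ℝ) + m)) * ((n : ℝ) * σw ^ 2)) *
        (((n + m : ℕ) : ℝ) ^ 2 / t) := hconst.symm
    _ ≤ (1 / ((n : ℝ) * ((n : ℝ) + m)) * ((n : ℝ) * σw ^ 2)) *
        ∫ ω, ((D ω * (D ω)ᵀ)⁻¹).trace := hchain
    _ = 1 / ((n : ℝ) * ((n : ℝ) + m)) * ((n : ℝ) * σw ^ 2 * ∫ ω, ((D ω * (D ω)ᵀ)⁻¹).trace)
        := by ring
end

section
/- Let n, m, j be positive integers and σ_w > 0. On a probability space, let D be a random (n+m)×j real matrix and W a random n×j real matrix such that: (i) D Dᵀ is almost surely invertible; (ii) D and W are independent; (iii) E[vec(W) vec(W)ᵀ] = σ_w² I_{nj}; and (iv) tr((D Dᵀ)⁻¹) and ‖W Dᵀ (D Dᵀ)⁻¹‖_F² are integrable. Let Θ ∈ ℝ^{n×(n+m)} be a fixed matrix and set X = Θ D + W. Then E[ ‖Θ − X Dᵀ (D Dᵀ)⁻¹‖_F² ] = n σ_w² E[ tr( (D Dᵀ)⁻¹ ) ]. -/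
open Matrix MeasureTheory ProbabilityTheory Finset

section Aux

variable {Ω : Type*} [MeasurableSpace Ω]

lemma meas_entry' {ι κ : Type*} {f : Ω → Matrix ι κ ℝ} (hf : Measurable f) (a : ι) (b : κ) :
    Measurable fun ω => f ω a b :=
  (measurable_pi_apply b).comp ((measurable_pi_apply a).comp hf)

lemma meas_det' {ι : Type*} [Fintype ι] [DecidableEq ι] {f : Ω → Matrix ι ι ℝ}
    (hf : ∀ a b, Measurable fun ω => f ω a b) : Measurable fun ω => (f ω).det := by
  simp_rw [Matrix.det_apply']
  exact Finset.measurable_sum _ fun σ _ =>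
    measurable_const.mul (Finset.measurable_prod _ fun i _ => hf _ _)

lemma meas_inv_entry' {ι : Type*} [Fintype ι] [DecidableEq ι] {f : Ω → Matrix ι ι ℝ}
    (hf : ∀ a b, Measurable fun ω => f ω a b) (a b : ι) :
    Measurable fun ω => (f ω)⁻¹ a b := by
  simp_rw [Matrix.inv_def, Matrix.smul_apply, smul_eq_mul, Ring.inverse_eq_inv,
    Matrix.adjugate_apply]
  refine ((meas_det' hf).inv).mul (meas_det' fun c d => ?_)
  simp_rw [Matrix.updateRow_apply]
  split_ifs
  · exact measurable_const
  · exact hf c d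

lemma integrable_mul_of_L2 {μ : Measure Ω} {f g : Ω → ℝ}
    (hf : MemLp f 2 μ) (hg : MemLp g 2 μ) : Integrable (fun ω => f ω * g ω) μ := by
  have h := hf.smul hg (p := 2) (q := 2) (r := 1)
  rw [memLp_one_iff_integrable] at h
  have h2 : Integrable (f * g) μ := by simpa [smul_eq_mul, mul_comm] using h
  exact h2

lemma frob_trace {p q : Type*} [Fintype p] [Fintype q] [DecidableEq p]
    (D : Matrix p q ℝ) (h : IsUnit (D * Dᵀ).det) :
    ∑ l : q, ∑ k : p, ((Dᵀ * (D * Dᵀ)⁻¹) l k) ^ 2 = ((D * Dᵀ)⁻¹).trace := by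
  have hsym : (D * Dᵀ)ᵀ = D * Dᵀ := by rw [transpose_mul, transpose_transpose]
  have hMtM : (Dᵀ * (D * Dᵀ)⁻¹)ᵀ * (Dᵀ * (D * Dᵀ)⁻¹) = (D * Dᵀ)⁻¹ := by
    rw [transpose_mul, transpose_transpose, transpose_nonsing_inv, hsym,
      Matrix.mul_assoc, ← Matrix.mul_assoc D, Matrix.mul_nonsing_inv _ h, Matrix.mul_one]
  calc ∑ l : q, ∑ k : p, ((Dᵀ * (D * Dᵀ)⁻¹) l k) ^ 2
      = ((Dᵀ * (D * Dᵀ)⁻¹)ᵀ * (Dᵀ * (D * Dᵀ)⁻¹)).trace := by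
        simp only [Matrix.trace, Matrix.diag, Matrix.mul_apply, Matrix.transpose_apply, sq]
        rw [Finset.sum_comm]
  _ = ((D * Dᵀ)⁻¹).trace := by rw [hMtM]

end Aux

/-- central intermediate equality in the proof of Theorem 1. Under the
stated assumptions on the random data matrix `D` and noise matrix `W`, with
`X = Θ D + W`, the expected squared estimation error of the least squares estimator is
`E[‖Θ − X Dᵀ (D Dᵀ)⁻¹‖_F²] = n σ_w² E[tr((D Dᵀ)⁻¹)]`. -/
theorem expected_ls_error_eq
    (n m j : ℕ) (hn : 0 < n) (hm : 0 < m) (hj : 0 < j)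
    (σw : ℝ) (hσw : 0 < σw)
    {Ω : Type*} [MeasureSpace Ω] [IsProbabilityMeasure (ℙ : Measure Ω)]
    (D : Ω → Matrix (Fin (n + m)) (Fin j) ℝ)
    (W : Ω → Matrix (Fin n) (Fin j) ℝ)
    (hDmeas : Measurable D) (hWmeas : Measurable W)
    -- (i) `D Dᵀ` is almost surely invertible
    (hDinv : ∀ᵐ ω ∂ℙ, IsUnit (D ω * (D ω)ᵀ).det)
    -- (ii) `D` and `W` are independent
    (hindep : IndepFun D W ℙ)
    -- (iii) `E[vec(W) vec(W)ᵀ] = σ_w² I`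
    (hWcov : (Matrix.of fun p q : Fin j × Fin n =>
        ∫ ω, vecCol (W ω) p * vecCol (W ω) q) =
      σw ^ 2 • (1 : Matrix (Fin j × Fin n) (Fin j × Fin n) ℝ))
    -- (iv) integrability assumptions
    (hinvint : Integrable (fun ω => ((D ω * (D ω)ᵀ)⁻¹).trace) ℙ)
    (herrint : Integrable
      (fun ω => frobNormSq (W ω * (D ω)ᵀ * (D ω * (D ω)ᵀ)⁻¹)) ℙ)
    (Θ : Matrix (Fin n) (Fin (n + m)) ℝ)
    (X : Ω → Matrix (Fin n) (Fin j) ℝ) (hX : ∀ ω, X ω = Θ * D ω + W ω) :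
    (∫ ω, frobNormSq (Θ - X ω * (D ω)ᵀ * (D ω * (D ω)ᵀ)⁻¹)) =
      (n : ℝ) * σw ^ 2 * ∫ ω, ((D ω * (D ω)ᵀ)⁻¹).trace := by
  -- notation
  have hWe : ∀ (i : Fin n) (l : Fin j), Measurable fun ω => W ω i l :=
    fun i l => meas_entry' hWmeas i l
  have hΨ : ∀ (l : Fin j) (k : Fin (n + m)),
      Measurable fun B : Matrix (Fin (n + m)) (Fin j) ℝ => (Bᵀ * (B * Bᵀ)⁻¹) l k := by
    intro l k
    have hid : ∀ a b, Measurable fun B : Matrix (Fin (n + m)) (Fin j) ℝ => B a b :=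
      fun a b => (measurable_pi_apply b).comp (measurable_pi_apply a)
    have hBBt : ∀ a b, Measurable fun B : Matrix (Fin (n + m)) (Fin j) ℝ => (B * Bᵀ) a b := by
      intro a b
      simp_rw [Matrix.mul_apply, Matrix.transpose_apply]
      exact Finset.measurable_sum _ fun c _ => (hid a c).mul (hid b c)
    simp_rw [Matrix.mul_apply, Matrix.transpose_apply]
    exact Finset.measurable_sum _ fun a _ => (hid a l).mul (meas_inv_entry' hBBt a k)
  have hMe : ∀ (l : Fin j) (k : Fin (n + m)),
      Measurable fun ω => ((D ω)ᵀ * (D ω * (D ω)ᵀ)⁻¹) l k :=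
    fun l k => (hΨ l k).comp hDmeas
  -- covariance entries
  have hcov : ∀ (i : Fin n) (l l' : Fin j),
      (∫ ω, W ω i l * W ω i l') = if l = l' then σw ^ 2 else 0 := by
    intro i l l'
    have h := Matrix.ext_iff.2 hWcov (l, i) (l', i)
    simp only [Matrix.of_apply, vecCol, Matrix.smul_apply, Matrix.one_apply, smul_eq_mul] at h
    rw [h]
    by_cases hll : l = l' <;> simp [hll, Prod.ext_iff]
  -- integrability of W entry squares, L2 membership
  have hWsq : ∀ i l, Integrable (fun ω => W ω i l * W ω i l) ℙ := by
    intro i l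
    by_contra hc
    have h := hcov i l l
    rw [if_pos rfl, integral_undef hc] at h
    exact pow_ne_zero 2 (ne_of_gt hσw) h.symm
  have hWL2 : ∀ i l, MemLp (fun ω => W ω i l) 2 ℙ := fun i l =>
    (memLp_two_iff_integrable_sq (hWe i l).aestronglyMeasurable).2
      (by simpa [sq] using hWsq i l)
  -- integrability of M entry squares, L2 membership
  have hMsq : ∀ (l : Fin j) (k : Fin (n + m)),
      Integrable (fun ω => ((D ω)ᵀ * (D ω * (D ω)ᵀ)⁻¹) l k ^ 2) ℙ := by
    intro l k
    refine hinvint.mono' ((hMe l k).pow_const 2).aestronglyMeasurable ?_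
    filter_upwards [hDinv] with ω hω
    rw [Real.norm_eq_abs, abs_of_nonneg (sq_nonneg _), ← frob_trace (D ω) hω]
    calc ((D ω)ᵀ * (D ω * (D ω)ᵀ)⁻¹) l k ^ 2
        ≤ ∑ k', ((D ω)ᵀ * (D ω * (D ω)ᵀ)⁻¹) l k' ^ 2 :=
          Finset.single_le_sum
            (f := fun k' => ((D ω)ᵀ * (D ω * (D ω)ᵀ)⁻¹) l k' ^ 2)
            (fun _ _ => sq_nonneg _) (Finset.mem_univ k)
      _ ≤ ∑ l', ∑ k', ((D ω)ᵀ * (D ω * (D ω)ᵀ)⁻¹) l' k' ^ 2 :=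
          Finset.single_le_sum
            (f := fun l' => ∑ k', ((D ω)ᵀ * (D ω * (D ω)ᵀ)⁻¹) l' k' ^ 2)
            (fun _ _ => Finset.sum_nonneg fun _ _ => sq_nonneg _) (Finset.mem_univ l)
  have hML2 : ∀ (l : Fin j) (k : Fin (n + m)),
      MemLp (fun ω => ((D ω)ᵀ * (D ω * (D ω)ᵀ)⁻¹) l k) 2 ℙ := fun l k =>
    (memLp_two_iff_integrable_sq (hMe l k).aestronglyMeasurable).2 (hMsq l k)
  -- independence of the product terms
  have hIndep : ∀ (i : Fin n) (l l' : Fin j) (k : Fin (n + m)),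
      IndepFun (fun ω => W ω i l * W ω i l')
        (fun ω => ((D ω)ᵀ * (D ω * (D ω)ᵀ)⁻¹) l k * ((D ω)ᵀ * (D ω * (D ω)ᵀ)⁻¹) l' k) ℙ := by
    intro i l l' k
    have h1 : Measurable fun B : Matrix (Fin n) (Fin j) ℝ => B i l * B i l' :=
      Measurable.mul (f := fun B : Matrix (Fin n) (Fin j) ℝ => B i l)
        (g := fun B : Matrix (Fin n) (Fin j) ℝ => B i l')
        ((measurable_pi_apply l).comp (measurable_pi_apply i))
        ((measurable_pi_apply l').comp (measurable_pi_apply i))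
    have h2 : Measurable fun B : Matrix (Fin (n + m)) (Fin j) ℝ =>
        (Bᵀ * (B * Bᵀ)⁻¹) l k * (Bᵀ * (B * Bᵀ)⁻¹) l' k := (hΨ l k).mul (hΨ l' k)
    exact hindep.symm.comp h1 h2
  -- integrability of each term
  have hterm_int : ∀ (i : Fin n) (k : Fin (n + m)) (l l' : Fin j),
      Integrable (fun ω => (W ω i l * W ω i l') *
        (((D ω)ᵀ * (D ω * (D ω)ᵀ)⁻¹) l k * ((D ω)ᵀ * (D ω * (D ω)ᵀ)⁻¹) l' k)) ℙ :=
    fun i k l l' => (hIndep i l l' k).integrable_mul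
      (integrable_mul_of_L2 (hWL2 i l) (hWL2 i l'))
      (integrable_mul_of_L2 (hML2 l k) (hML2 l' k))
  -- value of each term
  have hterm_val : ∀ (i : Fin n) (k : Fin (n + m)) (l l' : Fin j),
      (∫ ω, (W ω i l * W ω i l') *
        (((D ω)ᵀ * (D ω * (D ω)ᵀ)⁻¹) l k * ((D ω)ᵀ * (D ω * (D ω)ᵀ)⁻¹) l' k)) =
      (if l = l' then σw ^ 2 else 0) *
        ∫ ω, ((D ω)ᵀ * (D ω * (D ω)ᵀ)⁻¹) l k * ((D ω)ᵀ * (D ω * (D ω)ᵀ)⁻¹) l' k := by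
    intro i k l l'
    rw [(hIndep i l l' k).integral_fun_mul_eq_mul_integral
      (((hWe i l).mul (hWe i l')).aestronglyMeasurable)
      (((hMe l k).mul (hMe l' k)).aestronglyMeasurable), hcov i l l']
  -- pointwise expansion of the Frobenius norm
  have hexp : ∀ ω, frobNormSq (W ω * (D ω)ᵀ * (D ω * (D ω)ᵀ)⁻¹) =
      ∑ i : Fin n, ∑ k : Fin (n + m), ∑ l : Fin j, ∑ l' : Fin j,
        (W ω i l * W ω i l') *
          (((D ω)ᵀ * (D ω * (D ω)ᵀ)⁻¹) l k * ((D ω)ᵀ * (D ω * (D ω)ᵀ)⁻¹) l' k) := by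
    intro ω
    rw [Matrix.mul_assoc]
    set Mw := (D ω)ᵀ * (D ω * (D ω)ᵀ)⁻¹ with hMw
    simp only [frobNormSq, Matrix.mul_apply]
    refine Finset.sum_congr rfl fun i _ => Finset.sum_congr rfl fun k _ => ?_
    rw [sq, Finset.sum_mul_sum]
    exact Finset.sum_congr rfl fun l _ => Finset.sum_congr rfl fun l' _ => by ring
  -- step 1: reduce to the noise term
  have step1 : (∫ ω, frobNormSq (Θ - X ω * (D ω)ᵀ * (D ω * (D ω)ᵀ)⁻¹)) =
      ∫ ω, frobNormSq (W ω * (D ω)ᵀ * (D ω * (D ω)ᵀ)⁻¹) := by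
    refine integral_congr_ae ?_
    filter_upwards [hDinv] with ω hω
    rw [hX ω]
    have hmat : Θ - (Θ * D ω + W ω) * (D ω)ᵀ * (D ω * (D ω)ᵀ)⁻¹ =
        -(W ω * (D ω)ᵀ * (D ω * (D ω)ᵀ)⁻¹) := by
      rw [Matrix.add_mul, Matrix.add_mul, Matrix.mul_assoc Θ (D ω) (D ω)ᵀ,
        Matrix.mul_nonsing_inv_cancel_right _ _ hω, sub_add_cancel_left]
    rw [hmat]
    simp [frobNormSq, Matrix.neg_apply, neg_sq]
  -- the trace identity in integral form
  have hsum : (∑ k : Fin (n + m), ∑ l : Fin j,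
      ∫ ω, ((D ω)ᵀ * (D ω * (D ω)ᵀ)⁻¹) l k ^ 2) = ∫ ω, ((D ω * (D ω)ᵀ)⁻¹).trace := by
    calc (∑ k : Fin (n + m), ∑ l : Fin j, ∫ ω, ((D ω)ᵀ * (D ω * (D ω)ᵀ)⁻¹) l k ^ 2)
        = ∑ k : Fin (n + m), ∫ ω, ∑ l : Fin j, ((D ω)ᵀ * (D ω * (D ω)ᵀ)⁻¹) l k ^ 2 :=
          Finset.sum_congr rfl fun k _ =>
            (integral_finset_sum _ fun l _ => hMsq l k).symm
      _ = ∫ ω, ∑ k : Fin (n + m), ∑ l : Fin j, ((D ω)ᵀ * (D ω * (D ω)ᵀ)⁻¹) l k ^ 2 :=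
          (integral_finset_sum _ fun k _ =>
            integrable_finset_sum _ fun l _ => hMsq l k).symm
      _ = ∫ ω, ((D ω * (D ω)ᵀ)⁻¹).trace := by
          refine integral_congr_ae ?_
          filter_upwards [hDinv] with ω hω
          rw [Finset.sum_comm, frob_trace (D ω) hω]
  -- main computation
  rw [step1]
  calc (∫ ω, frobNormSq (W ω * (D ω)ᵀ * (D ω * (D ω)ᵀ)⁻¹))
      = ∫ ω, ∑ i : Fin n, ∑ k : Fin (n + m), ∑ l : Fin j, ∑ l' : Fin j,
          (W ω i l * W ω i l') *
            (((D ω)ᵀ * (D ω * (D ω)ᵀ)⁻¹) l k * ((D ω)ᵀ * (D ω * (D ω)ᵀ)⁻¹) l' k) := by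
        exact integral_congr_ae (Filter.Eventually.of_forall hexp)
    _ = ∑ i : Fin n, ∑ k : Fin (n + m), ∑ l : Fin j, ∑ l' : Fin j,
          ∫ ω, (W ω i l * W ω i l') *
            (((D ω)ᵀ * (D ω * (D ω)ᵀ)⁻¹) l k * ((D ω)ᵀ * (D ω * (D ω)ᵀ)⁻¹) l' k) := by
        rw [integral_finset_sum _ fun i _ => integrable_finset_sum _ fun k _ =>
          integrable_finset_sum _ fun l _ => integrable_finset_sum _ fun l' _ =>
            hterm_int i k l l']
        refine Finset.sum_congr rfl fun i _ => ?_
        rw [integral_finset_sum _ fun k _ => integrable_finset_sum _ fun l _ =>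
          integrable_finset_sum _ fun l' _ => hterm_int i k l l']
        refine Finset.sum_congr rfl fun k _ => ?_
        rw [integral_finset_sum _ fun l _ => integrable_finset_sum _ fun l' _ =>
          hterm_int i k l l']
        refine Finset.sum_congr rfl fun l _ => ?_
        rw [integral_finset_sum _ fun l' _ => hterm_int i k l l']
    _ = ∑ i : Fin n, ∑ k : Fin (n + m), ∑ l : Fin j,
          σw ^ 2 * ∫ ω, ((D ω)ᵀ * (D ω * (D ω)ᵀ)⁻¹) l k ^ 2 := by
        refine Finset.sum_congr rfl fun i _ => Finset.sum_congr rfl fun k _ =>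
          Finset.sum_congr rfl fun l _ => ?_
        simp_rw [hterm_val i k]
        rw [Finset.sum_eq_single l]
        · simp [sq]
        · intro b _ hb
          simp [Ne.symm hb]
        · intro h
          exact absurd (Finset.mem_univ l) h
    _ = (n : ℝ) * σw ^ 2 * ∫ ω, ((D ω * (D ω)ᵀ)⁻¹).trace := by
        simp_rw [← Finset.mul_sum]
        rw [Finset.sum_const, Finset.card_univ, Fintype.card_fin, nsmul_eq_mul, hsum]
        ring
end
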